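/- Let x = (x₁,x₂) ∈ Z² with 0 < x₁ < x₂. Suppose 0 < p_h < p_v < 1. Then τ^f_p(0,x) ≥ β_x · λ_h^{2(x₂+1)} · λ_v^{2(x₁+1)} · p_h^{2‖x‖}. -/

import Mathlib

open MeasureTheory Filter

/-- An edge of the square lattice `ℤ × ℤ`, encoded by its lower-left endpoint `base`
together with its direction: a horizontal edge joins `base` to `base + (1,0)`,
a vertical edge joins `base` to `base + (0,1)`. This encodes exactly the set
`𝔼` of nearest-neighbour edges of `ℤ²`. -/
structure LatticeEdge where
  base : ℤ × ℤ
  horiz : Bool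
deriving DecidableEq

namespace LatticeEdge

/-- First endpoint of an edge. -/
def fst (e : LatticeEdge) : ℤ × ℤ := e.base

/-- Second endpoint of an edge. -/
def snd (e : LatticeEdge) : ℤ × ℤ :=
  if e.horiz then (e.base.1 + 1, e.base.2) else (e.base.1, e.base.2 + 1)

/-- The two endpoints of an edge, as an unordered pair. -/
def ends (e : LatticeEdge) : Sym2 (ℤ × ℤ) := s(e.fst, e.snd)

end LatticeEdge

/-- The graph on `ℤ²` whose edges are the lattice edges belonging to `S`. -/
def graphOf (S : Set LatticeEdge) : SimpleGraph (ℤ × ℤ) where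
  Adj u v := u ≠ v ∧ ∃ e ∈ S, e.ends = s(u, v)
  symm := by
    constructor
    intro u v h
    obtain ⟨hne, e, he, hs⟩ := h
    exact ⟨hne.symm, e, he, hs.trans (Sym2.eq_swap)⟩
  loopless := by
    constructor
    intro u h
    exact h.1 rfl

/-- The graph `(ℤ², 𝔼 ∖ γ)` obtained by deleting the edges of `γ`. -/
def complGraph (γ : Finset LatticeEdge) : SimpleGraph (ℤ × ℤ) :=
  graphOf {e | e ∉ γ}

/-- A finite set `γ` of lattice edges is a *contour* if the graph `(ℤ², 𝔼 ∖ γ)` has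
exactly one finite connected component, and `γ` is minimal with this property:
for every `e ∈ γ`, the graph `(ℤ², 𝔼 ∖ (γ ∖ {e}))` has no finite connected component. -/
def IsContour (γ : Finset LatticeEdge) : Prop :=
  (∃! C : (complGraph γ).ConnectedComponent, C.supp.Finite) ∧
  ∀ e ∈ γ, ∀ C : (graphOf {f | f ∉ γ ∨ f = e}).ConnectedComponent, ¬ C.supp.Finite

/-- A contour `γ` *surrounds* a set `X ⊆ ℤ²` of vertices if `X` is contained in the
vertex set `I_γ` of the (unique) finite connected component of `(ℤ², 𝔼 ∖ γ)`. -/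
def Surrounds (γ : Finset LatticeEdge) (X : Set (ℤ × ℤ)) : Prop :=
  IsContour γ ∧ ∃ C : (complGraph γ).ConnectedComponent, C.supp.Finite ∧ X ⊆ C.supp

/-- `Γ^n_X` : the set of contours of cardinality `n` surrounding `X`. -/
def GammaN (X : Set (ℤ × ℤ)) (n : ℕ) : Set (Finset LatticeEdge) :=
  {γ | Surrounds γ X ∧ γ.card = n}

/-- `‖x‖ = 2(x₁ + x₂ + 2)`, the cardinality of a minimal contour surrounding `{0, x}`. -/
def normC (x : ℤ × ℤ) : ℕ := (2 * (x.1 + x.2 + 2)).toNat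

/-- `β_x` : the number of minimal contours surrounding `{0, x}`. -/
noncomputable def betaX (x : ℤ × ℤ) : ℕ := Nat.card ↥(GammaN {0, x} (normC x))

/-- Number of horizontal edges of `γ`, i.e. `|γ ∩ 𝔼ʰ|`. -/
def hCount (γ : Finset LatticeEdge) : ℕ := (γ.filter fun e => e.horiz = true).card

/-- Number of vertical edges of `γ`, i.e. `|γ ∩ 𝔼ᵛ|`. -/
def vCount (γ : Finset LatticeEdge) : ℕ := (γ.filter fun e => e.horiz = false).card

/-- The dual edge `e*` of a lattice edge `e`.  We identify the dual lattice
`ℤ² + (1/2, 1/2)` with `ℤ²` via `(a,b) ↦ (a + 1/2, b + 1/2)`; under this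
identification the dual edge crossing the horizontal edge `(a,b)–(a+1,b)` joins
`(a, b-1)` to `(a, b)` (a vertical dual edge), and the dual edge crossing the
vertical edge `(a,b)–(a,b+1)` joins `(a-1, b)` to `(a, b)` (a horizontal dual edge). -/
def dualEdge (e : LatticeEdge) : LatticeEdge :=
  if e.horiz then ⟨(e.base.1, e.base.2 - 1), false⟩ else ⟨(e.base.1 - 1, e.base.2), true⟩

/-- A finite set `S` of (dual) lattice edges is a *circuit* if it is the edge set of a
closed self-avoiding path: there are `n ≥ 3` distinct vertices `c 0, …, c (n-1)`,
cyclically consecutive ones being joined by an edge of `S`, and every edge of `S` arising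
this way. -/
def IsCircuit (S : Finset LatticeEdge) : Prop :=
  ∃ n : ℕ, 3 ≤ n ∧ ∃ c : ZMod n → ℤ × ℤ, Function.Injective c ∧
    (∀ i : ZMod n, ∃ e ∈ S, e.ends = s(c i, c (i + 1))) ∧
    (∀ e ∈ S, ∃ i : ZMod n, e.ends = s(c i, c (i + 1)))

/-- The dual edge `e_k*` joining `(k - 1/2, -1/2)` to `(k - 1/2, 1/2)`; in our
identification of the dual lattice with `ℤ²` this is the vertical dual edge with base
`(k-1, -1)`, i.e. the dual of the horizontal edge `(k-1, 0)–(k, 0)`. -/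
def ekStar (k : ℤ) : LatticeEdge := ⟨(k - 1, -1), false⟩

/-- The probability that the edge `e` is open: `p_h` for horizontal edges and `p_v`
for vertical ones. -/
noncomputable def edgeProb (ph pv : ℝ) (e : LatticeEdge) : ℝ := if e.horiz then ph else pv

/-- `P` is the Bernoulli product measure `P_{(p_h, p_v)}` on configurations
`ω ∈ {0,1}^𝔼` (encoded as `LatticeEdge → Bool`, `true` = open): it is a probability
measure and, for every finite set of edges, the states of those edges are independent
Bernoulli variables with the correct parameters.  These cylinder probabilities
characterize the product measure uniquely. -/
def IsBernoulliProduct (ph pv : ℝ) (P : Measure (LatticeEdge → Bool)) : Prop :=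
  IsProbabilityMeasure P ∧
    ∀ (F : Finset LatticeEdge) (σ : LatticeEdge → Bool),
      P {ω | ∀ e ∈ F, ω e = σ e} =
        ∏ e ∈ F, ENNReal.ofReal
          (if σ e then edgeProb ph pv e else 1 - edgeProb ph pv e)

/-- The graph of open edges of the configuration `ω`. -/
def openGraph (ω : LatticeEdge → Bool) : SimpleGraph (ℤ × ℤ) :=
  graphOf {e | ω e = true}

/-- `x` and `y` belong to the same finite open cluster of the configuration `ω`. -/
def SameFiniteCluster (ω : LatticeEdge → Bool) (x y : ℤ × ℤ) : Prop :=
  ∃ C : (openGraph ω).ConnectedComponent, x ∈ C.supp ∧ y ∈ C.supp ∧ C.supp.Finite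

/-- The truncated (finite) connectivity `τ^f_p(x,y)`: the probability that `x` and `y`
belong to the same finite open cluster. -/
noncomputable def tauF (P : Measure (LatticeEdge → Bool)) (x y : ℤ × ℤ) : ℝ :=
  (P {ω | SameFiniteCluster ω x y}).toReal

/-- The box `V_N = ([-N,N] × [-N,N]) ∩ ℤ²`. -/
def VN (N : ℕ) : Set (ℤ × ℤ) := {v | |v.1| ≤ (N : ℤ) ∧ |v.2| ≤ (N : ℤ)}

/-- The interior vertex boundary `∂_v^int V_N = {x ∈ V_N : d(x, ℤ² ∖ V_N) = 1}`. -/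
def intBdry (N : ℕ) : Set (ℤ × ℤ) :=
  {v | (|v.1| ≤ (N : ℤ) ∧ |v.2| ≤ (N : ℤ)) ∧ (|v.1| = (N : ℤ) ∨ |v.2| = (N : ℤ))}

/-- `e ∈ E_N`: both endpoints of `e` lie in `V_N`. -/
def edgeInBox (N : ℕ) (e : LatticeEdge) : Prop := e.fst ∈ VN N ∧ e.snd ∈ VN N

/-- The graph on `(V_N, open edges of E_N)` (vertices outside `V_N` are isolated). -/
def openGraphN (N : ℕ) (ω : LatticeEdge → Bool) : SimpleGraph (ℤ × ℤ) :=
  graphOf {e | edgeInBox N e ∧ ω e = true}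

/-- The finite-volume event defining `τ^{f,N}_p(x,y)`: there is an open cluster `A` of
`(V_N, open edges of E_N)` with `{x,y} ⊆ V_A` and `V_A ∩ ∂_v^int V_N = ∅`. -/
def FiniteVolEvent (N : ℕ) (x y : ℤ × ℤ) (ω : LatticeEdge → Bool) : Prop :=
  ∃ C : (openGraphN N ω).ConnectedComponent,
    x ∈ C.supp ∧ y ∈ C.supp ∧ C.supp ∩ intBdry N = ∅

/-- The finite-volume finite connectivity `τ^{f,N}_p(x,y)`. -/
noncomputable def tauFN (P : Measure (LatticeEdge → Bool)) (N : ℕ) (x y : ℤ × ℤ) : ℝ :=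
  (P {ω | FiniteVolEvent N x y ω}).toReal

/-- `λ = (1-p)/p`. -/
noncomputable def lam (p : ℝ) : ℝ := (1 - p) / p

/-- The threshold `η̃(p_h, x₁, x₂)` from the paper. -/
noncomputable def etaTilde (ph : ℝ) (x1 x2 : ℤ) : ℝ :=
  ((betaX (x1, x2) : ℝ) * ph ^ (4 * (x1 + x2 + 2)) /
      ((4 ^ 3 * lam ph) ^ (x1 + x2 + 3) / (1 - 4 ^ 3 * lam ph) +
        (betaX (x1, x2) : ℝ) * (1 + 12 * lam ph) ^ (2 * (x1 + x2 + 2)))) ^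
    (1 / (2 * ((x2 : ℝ) - (x1 : ℝ))))

/-!
A contour of the minimal length `2(x₁ + x₂ + 2)` surrounding `0` and `x` has exactly two edges
in every row and every column of the box `[0, x₁] × [0, x₂]`; hence its interior is a staircase
region, bounded below and above by two monotone lattice paths from `0` to `x`.  For each such
contour `γ`, let `E_γ` be the event that `γ` is closed and both paths (at most `2(x₁ + x₂)` edges)
are open.  On `E_γ`, the points `0` and `x` lie in a common open cluster enclosed by `γ`, and that
cluster contains the lowest and highest point of every column of the staircase, which determine
the staircase; so the events `E_γ` are disjoint.  Each has probability at least
`(1 - p_h)^{2(x₂+1)} (1 - p_v)^{2(x₁+1)} p_h^{2(x₁+x₂)}`, and this dominates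
`λ_h^{2(x₂+1)} λ_v^{2(x₁+1)} p_h^{2‖x‖}` because `p_h < p_v`.
-/

namespace LatticeEdge

@[simp] lemma fst_mk (v : ℤ × ℤ) (d : Bool) : (⟨v, d⟩ : LatticeEdge).fst = v := rfl

@[simp] lemma snd_mk_true (v : ℤ × ℤ) : (⟨v, true⟩ : LatticeEdge).snd = (v.1 + 1, v.2) := rfl

@[simp] lemma snd_mk_false (v : ℤ × ℤ) : (⟨v, false⟩ : LatticeEdge).snd = (v.1, v.2 + 1) := rfl

lemma fst_ne_snd (e : LatticeEdge) : e.fst ≠ e.snd := by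
  obtain ⟨⟨a, b⟩, _ | _⟩ := e <;> simp

end LatticeEdge

lemma graphOf_adj_of_mem {T : Set LatticeEdge} {e : LatticeEdge} (he : e ∈ T) :
    (graphOf T).Adj e.fst e.snd :=
  ⟨e.fst_ne_snd, e, he, rfl⟩

lemma graphOf_adj_cases {T : Set LatticeEdge} {u v : ℤ × ℤ} (h : (graphOf T).Adj u v) :
    (v.1 = u.1 + 1 ∧ v.2 = u.2) ∨ (v.1 = u.1 - 1 ∧ v.2 = u.2) ∨
      (v.1 = u.1 ∧ v.2 = u.2 + 1) ∨ (v.1 = u.1 ∧ v.2 = u.2 - 1) := by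
  obtain ⟨-, ⟨⟨a, b⟩, _ | _⟩, -, hends⟩ := h <;>
  · simp only [LatticeEdge.ends, LatticeEdge.fst_mk, LatticeEdge.snd_mk_true,
      LatticeEdge.snd_mk_false, Sym2.eq_iff, Prod.ext_iff] at hends
    omega

lemma Int.exists_crossing_of_le {p : ℤ → Prop} {a b : ℤ} (hab : a ≤ b) (ha : p a) (hb : ¬ p b) :
    ∃ t, a ≤ t ∧ t < b ∧ p t ∧ ¬ p (t + 1) := by
  induction b, hab using Int.leInduction with
  | base => exact absurd ha hb
  | succ b hab ih =>
    by_cases hpb : p b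
    · exact ⟨b, hab, by omega, hpb, hb⟩
    · obtain ⟨t, h1, h2, h3, h4⟩ := ih hpb
      exact ⟨t, h1, by omega, h3, h4⟩

namespace SimpleGraph.Walk

variable {V : Type*} {G : SimpleGraph V}

lemma exists_dart_of_le_of_lt (f : V → ℤ) (hf : ∀ u v, G.Adj u v → f v ≤ f u + 1)
    {a b : V} (w : G.Walk a b) {c : ℤ} (ha : f a ≤ c) (hb : c < f b) :
    ∃ d ∈ w.darts, f d.fst = c ∧ f d.snd = c + 1 := by
  induction w with
  | nil => omega
  | @cons u v b huv w ih =>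
    by_cases hv : f v ≤ c
    · obtain ⟨d, hd, h⟩ := ih hv hb
      exact ⟨d, by simp [hd], h⟩
    · have := hf u v huv
      exact ⟨⟨(u, v), huv⟩, by simp, show f u = c by omega, show f v = c + 1 by omega⟩

end SimpleGraph.Walk

section Crossings

variable {A : Set ℤ}

lemma Set.Finite.exists_crossing_lt (hA : A.Finite) {a : ℤ} (ha : a ∈ A) :
    ∃ t < a, t ∉ A ∧ t + 1 ∈ A := by
  obtain ⟨L, hL⟩ := hA.bddBelow
  have hlo : L - 1 ∉ A := fun h => by have := hL h; omega
  obtain ⟨t, -, ht, htA, ht1⟩ :=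
    Int.exists_crossing_of_le (p := (· ∉ A)) (by have := hL ha; omega) hlo (not_not.mpr ha)
  exact ⟨t, ht, htA, not_not.mp ht1⟩

lemma Set.Finite.exists_crossing_ge (hA : A.Finite) {a : ℤ} (ha : a ∈ A) :
    ∃ t ≥ a, t ∈ A ∧ t + 1 ∉ A := by
  obtain ⟨U, hU⟩ := hA.bddAbove
  have hhi : U + 1 ∉ A := fun h => by have := hU h; omega
  obtain ⟨t, ht, -, htA, ht1⟩ :=
    Int.exists_crossing_of_le (p := (· ∈ A)) (by have := hU ha; omega) ha hhi
  exact ⟨t, ht, htA, ht1⟩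

variable {D : Finset ℤ}

lemma two_le_card_of_crossings_subset (hA : A.Finite) (hne : A.Nonempty)
    (hD : ∀ t, Xor (t ∈ A) (t + 1 ∈ A) → t ∈ D) : 2 ≤ D.card := by
  obtain ⟨a, ha⟩ := hne
  obtain ⟨s, hs, hsA, hs1⟩ := hA.exists_crossing_lt ha
  obtain ⟨t, ht, htA, ht1⟩ := hA.exists_crossing_ge ha
  exact Finset.one_lt_card.mpr ⟨s, hD s (Or.inr ⟨hs1, hsA⟩), t, hD t (Or.inl ⟨htA, ht1⟩),
    by omega⟩

lemma ordConnected_of_crossings_subset (hA : A.Finite)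
    (hD : ∀ t, Xor (t ∈ A) (t + 1 ∈ A) → t ∈ D) (hcard : D.card ≤ 2) : A.OrdConnected := by
  rw [Set.ordConnected_iff]
  by_contra! ⟨x, hx, y, hy, -, hxy⟩
  obtain ⟨z, ⟨hxz, hzy⟩, hz⟩ := Set.not_subset.mp hxy
  obtain ⟨s, hs, hsA, hs1⟩ := hA.exists_crossing_lt hx
  obtain ⟨t, ht, htz, htA, ht1⟩ := Int.exists_crossing_of_le (p := (· ∈ A)) hxz hx hz
  obtain ⟨u, hu, huy, huA, hu1⟩ := Int.exists_crossing_of_le (p := (· ∉ A)) hzy hz (not_not.mpr hy)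
  have : 2 < D.card := Finset.two_lt_card.mpr
    ⟨s, hD s (Or.inr ⟨hs1, hsA⟩), t, hD t (Or.inl ⟨htA, ht1⟩),
      u, hD u (Or.inr ⟨not_not.mp hu1, huA⟩), by omega, by omega, by omega⟩
  omega

end Crossings

lemma SimpleGraph.Reachable.mem_of_adj_closed {V : Type*} {G : SimpleGraph V} {S : Set V}
    (hS : ∀ u v, u ∈ S → G.Adj u v → v ∈ S) {a b : V} (h : G.Reachable a b) (ha : a ∈ S) :
    b ∈ S := by
  obtain ⟨w⟩ := h
  induction w with
  | nil => exact ha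
  | cons huv _ ih => exact ih (hS _ _ ha huv)

lemma SimpleGraph.ConnectedComponent.mem_supp_of_mem_support {V : Type*} [DecidableEq V]
    {G : SimpleGraph V} {C : G.ConnectedComponent} {a b : V} (w : G.Walk a b) (ha : a ∈ C.supp)
    {v : V} (hv : v ∈ w.support) : v ∈ C.supp :=
  (C.mem_supp_iff v).mpr <|
    (SimpleGraph.ConnectedComponent.sound (w.takeUntil v hv).reachable.symm).trans ha

def edgeBoundary (S : Set (ℤ × ℤ)) : Set LatticeEdge := {e | Xor (e.fst ∈ S) (e.snd ∈ S)}

lemma edgeBoundary_subset_iff {S : Set (ℤ × ℤ)} {γ : Set LatticeEdge} :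
    edgeBoundary S ⊆ γ ↔ ∀ e ∉ γ, (e.fst ∈ S ↔ e.snd ∈ S) := by
  refine ⟨fun h e he => (not_xor _ _).mp fun hx => he (h hx), fun h e hx => ?_⟩
  by_contra he
  exact (not_xor _ _).mpr (h e he) hx

/-- Restoring an edge of `γ` with both or neither endpoints in `I_γ` would leave `I_γ` a finite
component, contradicting minimality. -/
lemma IsContour.coe_eq_edgeBoundary {γ : Finset LatticeEdge} (hγ : IsContour γ)
    {C : (complGraph γ).ConnectedComponent} (hC : C.supp.Finite) :
    (γ : Set LatticeEdge) = edgeBoundary C.supp := by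
  refine subset_antisymm (fun e he => ?_) (edgeBoundary_subset_iff.mpr fun e he =>
    C.mem_supp_congr_adj (graphOf_adj_of_mem he))
  by_contra hx
  replace hx := (not_xor _ _).mp hx
  have hclosed : ∀ u v, u ∈ C.supp → (graphOf {f | f ∉ γ ∨ f = e}).Adj u v → v ∈ C.supp := by
    rintro u v hu ⟨huv, f, hf | rfl, hends⟩
    · exact C.mem_supp_of_adj_mem_supp hu ⟨huv, f, hf, hends⟩
    · rcases Sym2.eq_iff.mp hends with ⟨rfl, rfl⟩ | ⟨rfl, rfl⟩
      exacts [hx.mp hu, hx.mpr hu]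
  obtain ⟨v₀, hv₀⟩ := C.nonempty_supp
  refine hγ.2 e he (SimpleGraph.connectedComponentMk _ v₀) (hC.subset fun v hv => ?_)
  exact (SimpleGraph.ConnectedComponent.exact hv).symm.mem_of_adj_closed hclosed hv₀

section Lines

/-- The point at position `t` on the `k`-th row (`d = true`) or column (`d = false`); an edge
of direction `d` joins consecutive points of such a line. -/
def linePt (d : Bool) (k t : ℤ) : ℤ × ℤ := if d then (t, k) else (k, t)

def lineIdx (d : Bool) (v : ℤ × ℤ) : ℤ := if d then v.2 else v.1

def linePos (d : Bool) (v : ℤ × ℤ) : ℤ := if d then v.1 else v.2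

@[simp] lemma lineIdx_linePt (d : Bool) (k t : ℤ) : lineIdx d (linePt d k t) = k := by
  cases d <;> rfl

@[simp] lemma linePos_linePt (d : Bool) (k t : ℤ) : linePos d (linePt d k t) = t := by
  cases d <;> rfl

lemma linePt_lineIdx_linePos (d : Bool) (v : ℤ × ℤ) : linePt d (lineIdx d v) (linePos d v) = v := by
  cases d <;> rfl

lemma linePt_injective (d : Bool) (k : ℤ) : Function.Injective (linePt d k) := fun t t' h => by
  simpa using congrArg (linePos d) h

lemma LatticeEdge.ends_eq_linePt (e : LatticeEdge) :
    e.fst = linePt e.horiz (lineIdx e.horiz e.base) (linePos e.horiz e.base) ∧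
      e.snd = linePt e.horiz (lineIdx e.horiz e.base) (linePos e.horiz e.base + 1) := by
  obtain ⟨⟨a, b⟩, _ | _⟩ := e <;> exact ⟨rfl, rfl⟩

def dirEdges (γ : Finset LatticeEdge) (d : Bool) : Finset LatticeEdge := γ.filter (·.horiz = d)

variable {S : Set (ℤ × ℤ)} {γ : Finset LatticeEdge}

lemma mem_image_dirEdges_of_xor (hγ : (γ : Set LatticeEdge) = edgeBoundary S) {d : Bool}
    {k t : ℤ} (ht : Xor (linePt d k t ∈ S) (linePt d k (t + 1) ∈ S)) :
    t ∈ ((dirEdges γ d).filter (fun e => lineIdx d e.base = k)).image (linePos d ·.base) := by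
  have he : (⟨linePt d k t, d⟩ : LatticeEdge) ∈ (γ : Set LatticeEdge) := by
    rw [hγ]
    cases d <;> exact ht
  simp only [Finset.mem_image, Finset.mem_filter, dirEdges]
  exact ⟨_, ⟨⟨he, rfl⟩, lineIdx_linePt d k t⟩, linePos_linePt d k t⟩

lemma card_dirEdges_eq_sum (hS : S.Finite) (hγ : (γ : Set LatticeEdge) = edgeBoundary S)
    (d : Bool) :
    (dirEdges γ d).card = ∑ k ∈ hS.toFinset.image (lineIdx d),
      ((dirEdges γ d).filter (fun e => lineIdx d e.base = k)).card := by
  refine Finset.card_eq_sum_card_fiberwise fun e he => ?_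
  have hb : e ∈ edgeBoundary S := hγ ▸ (Finset.mem_filter.mp he).1
  have hd : e.horiz = d := (Finset.mem_filter.mp he).2
  obtain ⟨hfst, hsnd⟩ := e.ends_eq_linePt
  rw [hd] at hfst hsnd
  simp only [Finset.coe_image, Set.Finite.coe_toFinset]
  rcases hb with ⟨h, -⟩ | ⟨h, -⟩
  · exact ⟨_, h, by rw [hfst, lineIdx_linePt]⟩
  · exact ⟨_, h, by rw [hsnd, lineIdx_linePt]⟩

lemma two_le_card_dirEdges_line (hS : S.Finite) (hγ : (γ : Set LatticeEdge) = edgeBoundary S)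
    (d : Bool) {k : ℤ} (hk : k ∈ hS.toFinset.image (lineIdx d)) :
    2 ≤ ((dirEdges γ d).filter (fun e => lineIdx d e.base = k)).card := by
  obtain ⟨v, hv, rfl⟩ := Finset.mem_image.mp hk
  refine (two_le_card_of_crossings_subset (hS.preimage (linePt_injective d _).injOn)
    ⟨linePos d v, ?_⟩ fun t ht => mem_image_dirEdges_of_xor hγ ht).trans Finset.card_image_le
  cases d <;> simpa [linePt, lineIdx, linePos] using hv

lemma two_mul_card_lines_le (hS : S.Finite) (hγ : (γ : Set LatticeEdge) = edgeBoundary S)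
    (d : Bool) : 2 * (hS.toFinset.image (lineIdx d)).card ≤ (dirEdges γ d).card := by
  rw [card_dirEdges_eq_sum hS hγ, mul_comm, ← smul_eq_mul, ← Finset.sum_const]
  exact Finset.sum_le_sum fun k hk => two_le_card_dirEdges_line hS hγ d hk

/-- Equality forces exactly two boundary edges, hence two crossings, on every line. -/
lemma ordConnected_line (hS : S.Finite) (hγ : (γ : Set LatticeEdge) = edgeBoundary S)
    (d : Bool) (hcard : (dirEdges γ d).card ≤ 2 * (hS.toFinset.image (lineIdx d)).card)
    (k : ℤ) : {t | linePt d k t ∈ S}.OrdConnected := by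
  by_cases hk : k ∈ hS.toFinset.image (lineIdx d)
  · have heq := (Finset.sum_eq_sum_iff_of_le fun k hk => two_le_card_dirEdges_line hS hγ d hk).mp
      (by
        rw [← card_dirEdges_eq_sum hS hγ, Finset.sum_const, smul_eq_mul]
        have := two_mul_card_lines_le hS hγ d
        omega)
    exact ordConnected_of_crossings_subset (hS.preimage (linePt_injective d _).injOn)
      (fun t ht => mem_image_dirEdges_of_xor hγ ht) (Finset.card_image_le.trans (heq k hk).ge)
  · convert Set.ordConnected_empty
    refine Set.eq_empty_of_forall_notMem fun t ht => hk ?_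
    exact Finset.mem_image.mpr ⟨_, hS.mem_toFinset.mpr ht, lineIdx_linePt d k t⟩

end Lines

lemma openGraph_adj_of_open {ω : LatticeEdge → Bool} {e : LatticeEdge} (he : ω e = true) :
    (openGraph ω).Adj e.fst e.snd :=
  graphOf_adj_of_mem he

lemma openGraph_reachable_vertical {ω : LatticeEdge → Bool} {c r₁ r₂ : ℤ} (h : r₁ ≤ r₂)
    (hopen : ∀ r, r₁ ≤ r → r < r₂ → ω ⟨(c, r), false⟩ = true) :
    (openGraph ω).Reachable (c, r₁) (c, r₂) := by
  induction r₂, h using Int.leInduction with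
  | base => rfl
  | succ r₂ h ih =>
    exact (ih fun r h₁ h₂ => hopen r h₁ (by omega)).trans
      (openGraph_adj_of_open (hopen r₂ h (by omega))).reachable

/-- A monotone lattice path from `(0,0)` to `(m,n)`: in column `c` it climbs from height
`height (c - 1)` to `height c`, then steps right. -/
structure MonotonePath (m n : ℕ) where
  height : ℤ → ℤ
  monotoneOn : MonotoneOn height (Set.Icc (-1) m)
  height_neg_one : height (-1) = 0
  height_last : height m = n

namespace MonotonePath

variable {m n : ℕ} (p : MonotonePath m n)

lemma height_le_height {a b : ℤ} (ha : -1 ≤ a) (hab : a ≤ b) (hb : b ≤ m) :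
    p.height a ≤ p.height b :=
  p.monotoneOn ⟨ha, by omega⟩ ⟨by omega, hb⟩ hab

lemma height_nonneg {a : ℤ} (ha : -1 ≤ a) (ha' : a ≤ m) : 0 ≤ p.height a :=
  p.height_neg_one ▸ p.height_le_height le_rfl ha ha'

lemma height_le {a : ℤ} (ha : -1 ≤ a) (ha' : a ≤ m) : p.height a ≤ n :=
  p.height_last ▸ p.height_le_height ha ha' le_rfl

def verts : Set (ℤ × ℤ) :=
  {v | 0 ≤ v.1 ∧ v.1 ≤ m ∧ p.height (v.1 - 1) ≤ v.2 ∧ v.2 ≤ p.height v.1}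

noncomputable def vertEdges : Finset LatticeEdge :=
  (Finset.Icc (0 : ℤ) m).biUnion fun c =>
    (Finset.Ico (p.height (c - 1)) (p.height c)).image fun r => ⟨(c, r), false⟩

noncomputable def horizEdges : Finset LatticeEdge :=
  (Finset.Ico (0 : ℤ) m).image fun c => ⟨(c, p.height c), true⟩

noncomputable def edges : Finset LatticeEdge := p.vertEdges ∪ p.horizEdges

lemma mem_vertEdges {e : LatticeEdge} : e ∈ p.vertEdges ↔ ∃ c r : ℤ, 0 ≤ c ∧ c ≤ m ∧
    p.height (c - 1) ≤ r ∧ r < p.height c ∧ e = ⟨(c, r), false⟩ := by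
  simp only [vertEdges, Finset.mem_biUnion, Finset.mem_Icc, Finset.mem_image, Finset.mem_Ico]
  constructor
  · rintro ⟨c, ⟨h₀, h₁⟩, r, ⟨h₂, h₃⟩, rfl⟩
    exact ⟨c, r, h₀, h₁, h₂, h₃, rfl⟩
  · rintro ⟨c, r, h₀, h₁, h₂, h₃, rfl⟩
    exact ⟨c, ⟨h₀, h₁⟩, r, ⟨h₂, h₃⟩, rfl⟩

lemma mem_horizEdges {e : LatticeEdge} :
    e ∈ p.horizEdges ↔ ∃ c : ℤ, 0 ≤ c ∧ c < m ∧ e = ⟨(c, p.height c), true⟩ := by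
  simp only [horizEdges, Finset.mem_image, Finset.mem_Ico]
  constructor
  · rintro ⟨c, ⟨h₀, h₁⟩, rfl⟩
    exact ⟨c, h₀, h₁, rfl⟩
  · rintro ⟨c, h₀, h₁, rfl⟩
    exact ⟨c, ⟨h₀, h₁⟩, rfl⟩

lemma ends_mem_verts {e : LatticeEdge} (he : e ∈ p.edges) :
    e.fst ∈ p.verts ∧ e.snd ∈ p.verts := by
  rcases Finset.mem_union.mp he with he | he
  · obtain ⟨c, r, h₀, h₁, h₂, h₃, rfl⟩ := p.mem_vertEdges.mp he
    exact ⟨⟨h₀, h₁, h₂, h₃.le⟩, show 0 ≤ c ∧ c ≤ m ∧ p.height (c - 1) ≤ r + 1 ∧ r + 1 ≤ p.height c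
      from ⟨h₀, h₁, by omega, h₃⟩⟩
  · obtain ⟨c, h₀, h₁, rfl⟩ := p.mem_horizEdges.mp he
    have hmono := p.height_le_height (a := c) (b := c + 1) (by omega) (by omega) (by omega)
    exact ⟨⟨h₀, h₁.le, p.height_le_height (a := c - 1) (by omega) (by omega) h₁.le, le_rfl⟩,
      show 0 ≤ c + 1 ∧ c + 1 ≤ m ∧ p.height (c + 1 - 1) ≤ p.height c ∧ p.height c ≤ p.height (c + 1)
      from ⟨by omega, by omega, by simp, hmono⟩⟩

/-- Vertical edges of a monotone path sit at pairwise distinct heights in `[0, n)`. -/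
lemma card_vertEdges_le : p.vertEdges.card ≤ n := by
  have hmaps : Set.MapsTo (fun e : LatticeEdge => e.base.2) p.vertEdges (Finset.Ico 0 (n : ℤ)) := by
    intro e he
    obtain ⟨c, r, h₀, h₁, h₂, h₃, rfl⟩ := p.mem_vertEdges.mp he
    have := p.height_nonneg (a := c - 1) (by omega) (by omega)
    have := p.height_le (a := c) (by omega) h₁
    simp only [Finset.coe_Ico, Set.mem_Ico]
    omega
  have hinj : Set.InjOn (fun e : LatticeEdge => e.base.2) p.vertEdges := by
    intro e he e' he' hee
    obtain ⟨c, r, h₀, h₁, h₂, h₃, rfl⟩ := p.mem_vertEdges.mp he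
    obtain ⟨c', r', h₀', h₁', h₂', h₃', rfl⟩ := p.mem_vertEdges.mp he'
    obtain rfl : r = r' := hee
    have hcc : c = c' := by
      by_contra hne
      rcases lt_or_gt_of_ne hne with h | h
      · have := p.height_le_height (a := c) (b := c' - 1) (by omega) (by omega) (by omega)
        omega
      · have := p.height_le_height (a := c') (b := c - 1) (by omega) (by omega) (by omega)
        omega
    rw [hcc]
  simpa using Finset.card_le_card_of_injOn _ hmaps hinj

lemma card_edges_le : p.edges.card ≤ m + n := by
  have hh : p.horizEdges.card ≤ m := Finset.card_image_le.trans (by simp)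
  have := p.card_vertEdges_le
  have := Finset.card_union_le p.vertEdges p.horizEdges
  rw [edges]
  omega

lemma reachable_of_edges_open {ω : LatticeEdge → Bool} (hω : ∀ e ∈ p.edges, ω e = true)
    {v : ℤ × ℤ} (hv : v ∈ p.verts) : (openGraph ω).Reachable (0, 0) v := by
  have hvert : ∀ c r : ℤ, 0 ≤ c → c ≤ m → p.height (c - 1) ≤ r → r < p.height c →
      ω ⟨(c, r), false⟩ = true := fun c r h₀ h₁ h₂ h₃ =>
    hω _ (Finset.mem_union_left _ (p.mem_vertEdges.mpr ⟨c, r, h₀, h₁, h₂, h₃, rfl⟩))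
  have hcorner : ∀ c : ℤ, 0 ≤ c → c ≤ m → (openGraph ω).Reachable (0, 0) (c, p.height (c - 1)) := by
    intro c hc
    induction c, hc using Int.leInduction with
    | base => intro; rw [zero_sub, p.height_neg_one]
    | succ c hc ih =>
      intro hcm
      have hclimb := openGraph_reachable_vertical
        (p.height_le_height (by omega) (by omega) (by omega)) fun r h₂ h₃ =>
          hvert c r hc (by omega) h₂ h₃
      have hstep := openGraph_adj_of_open (hω _ (Finset.mem_union_right _
        (p.mem_horizEdges.mpr ⟨c, hc, by omega, rfl⟩)))
      rw [add_sub_cancel_right]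
      exact ((ih (by omega)).trans hclimb).trans hstep.reachable
  obtain ⟨h₀, h₁, h₂, h₃⟩ := hv
  exact (hcorner v.1 h₀ h₁).trans (openGraph_reachable_vertical h₂ fun r h₄ h₅ =>
    hvert v.1 r h₀ h₁ (by omega) (by omega))

end MonotonePath

structure Staircase (m n : ℕ) where
  lower : MonotonePath m n
  upper : MonotonePath m n
  lower_le_upper : ∀ c : ℤ, 0 ≤ c → c ≤ m → lower.height c ≤ upper.height c

namespace Staircase

variable {m n : ℕ} (st : Staircase m n)

def region : Set (ℤ × ℤ) :=
  {v | 0 ≤ v.1 ∧ v.1 ≤ m ∧ st.lower.height (v.1 - 1) ≤ v.2 ∧ v.2 ≤ st.upper.height v.1}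

noncomputable def edges : Finset LatticeEdge := st.lower.edges ∪ st.upper.edges

lemma lower_verts_subset : st.lower.verts ⊆ st.region := fun _ ⟨h₀, h₁, h₂, h₃⟩ =>
  ⟨h₀, h₁, h₂, h₃.trans (st.lower_le_upper _ h₀ h₁)⟩

lemma upper_verts_subset : st.upper.verts ⊆ st.region := by
  rintro v ⟨h₀, h₁, h₂, h₃⟩
  refine ⟨h₀, h₁, le_trans ?_ h₂, h₃⟩
  rcases eq_or_lt_of_le h₀ with h | h
  · rw [← h, zero_sub, st.lower.height_neg_one, st.upper.height_neg_one]
  · exact st.lower_le_upper _ (by omega) (by omega)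

lemma ends_mem_region {e : LatticeEdge} (he : e ∈ st.edges) :
    e.fst ∈ st.region ∧ e.snd ∈ st.region := by
  rcases Finset.mem_union.mp he with he | he
  · exact (st.lower.ends_mem_verts he).imp (st.lower_verts_subset ·) (st.lower_verts_subset ·)
  · exact (st.upper.ends_mem_verts he).imp (st.upper_verts_subset ·) (st.upper_verts_subset ·)

lemma card_edges_le : st.edges.card ≤ 2 * (m + n) := by
  have := Finset.card_union_le st.lower.edges st.upper.edges
  have := st.lower.card_edges_le
  have := st.upper.card_edges_le
  rw [edges]
  omega

lemma region_finite : st.region.Finite := by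
  refine (Set.finite_Icc ((0 : ℤ), (0 : ℤ)) ((m : ℤ), (n : ℤ))).subset ?_
  rintro ⟨c, r⟩ ⟨h₀, h₁, h₂, h₃⟩
  dsimp only at h₀ h₁ h₂ h₃
  have := st.lower.height_nonneg (a := c - 1) (by omega) (by omega)
  have := st.upper.height_le (a := c) (by omega) h₁
  exact ⟨⟨h₀, by omega⟩, ⟨h₁, by omega⟩⟩

lemma origin_mem_lower_verts : ((0 : ℤ), (0 : ℤ)) ∈ st.lower.verts :=
  ⟨le_rfl, by omega, by simp [st.lower.height_neg_one],
    st.lower.height_nonneg (by omega) (by omega)⟩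

lemma corner_mem_upper_verts : ((m : ℤ), (n : ℤ)) ∈ st.upper.verts :=
  ⟨by omega, le_rfl, st.upper.height_le (by omega) (by omega), st.upper.height_last.ge⟩

/-- Only the lowest and the highest point of each column matter, since the columns of
`st'.region` are intervals. -/
lemma region_subset_of_verts_subset {st' : Staircase m n} (hl : st.lower.verts ⊆ st'.region)
    (hu : st.upper.verts ⊆ st'.region) : st.region ⊆ st'.region := by
  rintro ⟨c, r⟩ ⟨h₀, h₁, h₂, h₃⟩
  have hlow := hl (show (c, st.lower.height (c - 1)) ∈ st.lower.verts from
    ⟨h₀, h₁, le_rfl, st.lower.height_le_height (by omega) (by omega) h₁⟩)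
  have hup := hu (show (c, st.upper.height c) ∈ st.upper.verts from
    ⟨h₀, h₁, st.upper.height_le_height (by omega) (by omega) h₁, le_rfl⟩)
  exact ⟨h₀, h₁, hlow.2.2.1.trans h₂, h₃.trans hup.2.2.2⟩

end Staircase

namespace MonotonePath

variable {m n : ℕ}

/-- The path running along the bottoms `l 0, …, l m` of the columns. -/
def ofBottoms (l : ℤ → ℤ) (hl : MonotoneOn l (Set.Icc 0 m)) (h0 : l 0 = 0) (hm : l m ≤ n) :
    MonotonePath m n where
  height c := if c < m then l (c + 1) else n
  monotoneOn a ha b hb hab := by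
    dsimp only
    split_ifs with ha' hb'
    · exact hl ⟨by linarith [ha.1], by omega⟩ ⟨by linarith [hb.1], by omega⟩ (by omega)
    · exact (hl ⟨by linarith [ha.1], by omega⟩ ⟨by omega, le_rfl⟩ (by omega)).trans hm
    · omega
    · exact le_rfl
  height_neg_one := by rw [if_pos (by omega), neg_add_cancel, h0]
  height_last := by simp

lemma ofBottoms_height {l : ℤ → ℤ} {hl : MonotoneOn l (Set.Icc 0 m)} {h0 : l 0 = 0}
    {hm : l m ≤ n} {c : ℤ} (hc : c < m) : (ofBottoms l hl h0 hm).height c = l (c + 1) := by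
  simp [ofBottoms, hc]

lemma ofBottoms_height_sub_one {l : ℤ → ℤ} {hl : MonotoneOn l (Set.Icc 0 m)} {h0 : l 0 = 0}
    {hm : l m ≤ n} {c : ℤ} (hc : c ≤ m) : (ofBottoms l hl h0 hm).height (c - 1) = l c := by
  rw [ofBottoms_height (by omega), sub_add_cancel]

/-- The path running along the tops `u 0, …, u m` of the columns. -/
def ofTops (u : ℤ → ℤ) (hu : MonotoneOn u (Set.Icc 0 m)) (h0 : 0 ≤ u 0) (hm : u m = n) :
    MonotonePath m n where
  height c := if c < 0 then 0 else u c
  monotoneOn a ha b hb hab := by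
    dsimp only
    split_ifs with ha' hb'
    · exact le_rfl
    · exact h0.trans (hu ⟨le_rfl, by omega⟩ ⟨by omega, hb.2⟩ (by omega))
    · omega
    · exact hu ⟨by omega, by linarith [ha.2]⟩ ⟨by omega, hb.2⟩ hab
  height_neg_one := by simp
  height_last := by simp [hm]

lemma ofTops_height {u : ℤ → ℤ} {hu : MonotoneOn u (Set.Icc 0 m)} {h0 : 0 ≤ u 0}
    {hm : u m = n} {c : ℤ} (hc : 0 ≤ c) : (ofTops u hu h0 hm).height c = u c := by
  simp [ofTops, not_lt.mpr hc]

end MonotonePath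

def Staircase.ofColumns {m n : ℕ} (l u : ℤ → ℤ) (hl : MonotoneOn l (Set.Icc 0 m))
    (hu : MonotoneOn u (Set.Icc 0 m)) (hl0 : l 0 = 0) (hlm : l m ≤ n) (hu0 : 0 ≤ u 0)
    (hum : u m = n) (hlu : ∀ c : ℤ, 0 ≤ c → c < m → l (c + 1) ≤ u c) : Staircase m n where
  lower := .ofBottoms l hl hl0 hlm
  upper := .ofTops u hu hu0 hum
  lower_le_upper c h₀ h₁ := by
    rw [MonotonePath.ofTops_height h₀]
    rcases lt_or_eq_of_le h₁ with h | rfl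
    · exact (MonotonePath.ofBottoms_height h).trans_le (hlu c h₀ h)
    · exact (MonotonePath.height_last _).trans_le hum.ge

lemma Staircase.region_ofColumns {m n : ℕ} {l u : ℤ → ℤ} {hl : MonotoneOn l (Set.Icc 0 m)}
    {hu : MonotoneOn u (Set.Icc 0 m)} {hl0 : l 0 = 0} {hlm : l m ≤ n} {hu0 : 0 ≤ u 0}
    {hum : u m = n} {hlu : ∀ c : ℤ, 0 ≤ c → c < m → l (c + 1) ≤ u c} :
    (ofColumns l u hl hu hl0 hlm hu0 hum hlu).region =
      {v : ℤ × ℤ | 0 ≤ v.1 ∧ v.1 ≤ m ∧ l v.1 ≤ v.2 ∧ v.2 ≤ u v.1} := by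
  ext ⟨c, r⟩
  refine and_congr_right fun h₀ => and_congr_right fun h₁ => ?_
  dsimp only [ofColumns] at h₀ h₁ ⊢
  rw [MonotonePath.ofBottoms_height_sub_one h₁, MonotonePath.ofTops_height h₀]

/-- Otherwise every row from `0` up to `r` would lie strictly left of column `c`: row `0` does,
and since rows are intervals avoiding column `c`, overlapping consecutive rows lie on the same
side of it. -/
lemma exists_le_of_rows_ordConnected {S : Set (ℤ × ℤ)} (hrow : ∀ r, {c | (c, r) ∈ S}.OrdConnected)
    (h0 : ((0 : ℤ), (0 : ℤ)) ∈ S) {r : ℤ}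
    (hstep : ∀ t, 0 ≤ t → t < r → ∃ a, (a, t) ∈ S ∧ (a, t + 1) ∈ S)
    {c c' : ℤ} (hc : 0 ≤ c) (hcc' : c ≤ c') (hr : 0 ≤ r) (h : (c', r) ∈ S) :
    ∃ r' ≤ r, (c, r') ∈ S := by
  by_contra! hno
  have hleft : ∀ t, 0 ≤ t → t ≤ r → ∃ a < c, (a, t) ∈ S := by
    intro t ht
    induction t, ht using Int.leInduction with
    | base =>
      intro _
      refine ⟨0, lt_of_le_of_ne hc fun h => hno 0 hr ?_, h0⟩
      rwa [← h]
    | succ t ht ih =>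
      intro htr
      obtain ⟨a, ha, haS⟩ := ih (by omega)
      obtain ⟨b, hbt, hbt'⟩ := hstep t ht (by omega)
      refine ⟨b, not_le.mp fun hcb => hno t (by omega) ?_, hbt'⟩
      exact (hrow t).out haS hbt ⟨ha.le, hcb⟩
  obtain ⟨a, ha, haS⟩ := hleft r hr le_rfl
  exact hno r le_rfl ((hrow r).out haS h ⟨ha.le, hcc'⟩)

/-- The mirror image of `exists_le_of_rows_ordConnected` under `v ↦ (m, n) - v`. -/
lemma exists_ge_of_rows_ordConnected {S : Set (ℤ × ℤ)} {m n : ℤ}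
    (hrow : ∀ r, {c | (c, r) ∈ S}.OrdConnected)
    (hmn : (m, n) ∈ S) {r : ℤ}
    (hstep : ∀ t, r ≤ t → t < n → ∃ a, (a, t) ∈ S ∧ (a, t + 1) ∈ S)
    {c c' : ℤ} (hcc' : c ≤ c') (hc' : c' ≤ m) (hr : r ≤ n) (h : (c, r) ∈ S) :
    ∃ r' ≥ r, (c', r') ∈ S := by
  set S' : Set (ℤ × ℤ) := {v | (m - v.1, n - v.2) ∈ S}
  have hrow' : ∀ t, {a | (a, t) ∈ S'}.OrdConnected := fun t => ⟨fun x hx y hy z hz =>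
    (hrow (n - t)).out hy hx ⟨by linarith [hz.2], by linarith [hz.1]⟩⟩
  have hstep' : ∀ t, 0 ≤ t → t < n - r → ∃ a, (a, t) ∈ S' ∧ (a, t + 1) ∈ S' := by
    intro t ht htr
    obtain ⟨a, ha, ha'⟩ := hstep (n - t - 1) (by omega) (by omega)
    exact ⟨m - a, by simpa [S'] using ha', by simpa [S', sub_add_eq_sub_sub] using ha⟩
  obtain ⟨r', hr', hS'⟩ := exists_le_of_rows_ordConnected hrow' (by simpa [S'] using hmn)
    hstep' (c := m - c') (c' := m - c) (by omega) (by omega) (by omega)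
    (by simpa [S'] using h)
  exact ⟨n - r', by omega, by simpa [S'] using hS'⟩

section Columns

variable {S : Set (ℤ × ℤ)} {c r : ℤ}

noncomputable def colBot (S : Set (ℤ × ℤ)) (c : ℤ) : ℤ := sInf {r | (c, r) ∈ S}

noncomputable def colTop (S : Set (ℤ × ℤ)) (c : ℤ) : ℤ := sSup {r | (c, r) ∈ S}

lemma colBot_le (hS : ∀ v ∈ S, 0 ≤ v.2) (h : (c, r) ∈ S) : colBot S c ≤ r :=
  csInf_le ⟨0, fun _ hr => hS _ hr⟩ h

lemma mk_colBot_mem (hS : ∀ v ∈ S, 0 ≤ v.2) (h : (c, r) ∈ S) : (c, colBot S c) ∈ S :=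
  Int.csInf_mem ⟨r, h⟩ ⟨0, fun _ hr => hS _ hr⟩

lemma le_colTop {n : ℤ} (hS : ∀ v ∈ S, v.2 ≤ n) (h : (c, r) ∈ S) : r ≤ colTop S c :=
  le_csSup ⟨n, fun _ hr => hS _ hr⟩ h

lemma mk_colTop_mem {n : ℤ} (hS : ∀ v ∈ S, v.2 ≤ n) (h : (c, r) ∈ S) : (c, colTop S c) ∈ S :=
  Int.csSup_mem ⟨r, h⟩ ⟨n, fun _ hr => hS _ hr⟩

end Columns

theorem exists_staircase_region_eq {m n : ℕ} {S : Set (ℤ × ℤ)}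
    (h0 : ((0 : ℤ), (0 : ℤ)) ∈ S) (hmn : ((m : ℤ), (n : ℤ)) ∈ S)
    (hbox : ∀ v ∈ S, 0 ≤ v.1 ∧ v.1 ≤ m ∧ 0 ≤ v.2 ∧ v.2 ≤ n)
    (hcol : ∀ c, {r | (c, r) ∈ S}.OrdConnected) (hrow : ∀ r, {c | (c, r) ∈ S}.OrdConnected)
    (hstepc : ∀ c : ℤ, 0 ≤ c → c < m → ∃ r, (c, r) ∈ S ∧ (c + 1, r) ∈ S)
    (hstepr : ∀ r : ℤ, 0 ≤ r → r < n → ∃ c, (c, r) ∈ S ∧ (c, r + 1) ∈ S) :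
    ∃ st : Staircase m n, st.region = S := by
  have hpos : ∀ v ∈ S, 0 ≤ v.2 := fun v hv => (hbox v hv).2.2.1
  have hle : ∀ v ∈ S, v.2 ≤ n := fun v hv => (hbox v hv).2.2.2
  have hne : ∀ c ∈ Set.Icc (0 : ℤ) m, ∃ r, (c, r) ∈ S := fun c ⟨h₀, h₁⟩ =>
    (lt_or_eq_of_le h₁).elim (fun h => (hstepc c h₀ h).imp fun _ h => h.1) fun h => ⟨n, h ▸ hmn⟩
  have hbot : ∀ c ∈ Set.Icc (0 : ℤ) m, (c, colBot S c) ∈ S := fun c hc =>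
    (hne c hc).elim fun _ h => mk_colBot_mem hpos h
  have htop : ∀ c ∈ Set.Icc (0 : ℤ) m, (c, colTop S c) ∈ S := fun c hc =>
    (hne c hc).elim fun _ h => mk_colTop_mem hle h
  have hm : ((m : ℤ) ∈ Set.Icc 0 (m : ℤ)) := ⟨by omega, le_rfl⟩
  have hbot_mono : MonotoneOn (colBot S) (Set.Icc 0 m) := fun c hc c' hc' h => by
    obtain ⟨r', hr', hS⟩ := exists_le_of_rows_ordConnected hrow h0
      (fun t ht htr => hstepr t ht (htr.trans_le (hle _ (hbot c' hc')))) hc.1 h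
      (hpos _ (hbot c' hc')) (hbot c' hc')
    exact (colBot_le hpos hS).trans hr'
  have htop_mono : MonotoneOn (colTop S) (Set.Icc 0 m) := fun c hc c' hc' h => by
    obtain ⟨r', hr', hS⟩ := exists_ge_of_rows_ordConnected hrow hmn
      (fun t ht htr => hstepr t ((hpos _ (htop c hc)).trans ht) htr) h hc'.2
      (hle _ (htop c hc)) (htop c hc)
    exact hr'.trans (le_colTop hle hS)
  refine ⟨.ofColumns (colBot S) (colTop S) hbot_mono htop_mono
    (le_antisymm (colBot_le hpos h0) (hpos _ (hbot 0 ⟨le_rfl, by omega⟩))) (hle _ (hbot m hm))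
    (hpos _ (htop 0 ⟨le_rfl, by omega⟩)) (le_antisymm (hle _ (htop m hm)) (le_colTop hle hmn))
    (fun c h₀ h => ?_), ?_⟩
  · obtain ⟨r, hr, hr'⟩ := hstepc c h₀ h
    exact (colBot_le hpos hr').trans (le_colTop hle hr)
  · rw [Staircase.region_ofColumns]
    ext ⟨c, r⟩
    refine ⟨fun ⟨h₀, h₁, h₂, h₃⟩ => (hcol c).out (hbot c ⟨h₀, h₁⟩) (htop c ⟨h₀, h₁⟩) ⟨h₂, h₃⟩,
      fun h => ?_⟩
    obtain ⟨h₀, h₁, -, -⟩ := hbox _ h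
    exact ⟨h₀, h₁, colBot_le hpos h, le_colTop hle h⟩

lemma exists_linePt_step {T : Set LatticeEdge} {S : Set (ℤ × ℤ)} {a b : ℤ × ℤ}
    (w : (graphOf T).Walk a b) (hw : ∀ v ∈ w.support, v ∈ S) (d : Bool) {t : ℤ}
    (ha : linePos d a ≤ t) (hb : t < linePos d b) :
    ∃ k, linePt d k t ∈ S ∧ linePt d k (t + 1) ∈ S := by
  have hstep : ∀ u v, (graphOf T).Adj u v → linePos d v ≤ linePos d u + 1 ∧
      (linePos d v = linePos d u + 1 → lineIdx d v = lineIdx d u) := fun u v huv => by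
    rcases graphOf_adj_cases huv with h | h | h | h <;> cases d <;>
      simp only [linePos, lineIdx, Bool.false_eq_true, ↓reduceIte] <;> omega
  obtain ⟨dt, hdt, h₁, h₂⟩ := w.exists_dart_of_le_of_lt _ (fun u v h => (hstep u v h).1) ha hb
  refine ⟨lineIdx d dt.fst, ?_, ?_⟩
  · rw [← h₁, linePt_lineIdx_linePos]
    exact hw _ (w.dart_fst_mem_support_of_mem_darts hdt)
  · rw [← (hstep _ _ dt.adj).2 (by omega), ← h₂, linePt_lineIdx_linePos]
    exact hw _ (w.dart_snd_mem_support_of_mem_darts hdt)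

lemma hCount_add_vCount (γ : Finset LatticeEdge) : hCount γ + vCount γ = γ.card := by
  simpa [hCount, vCount] using
    Finset.card_filter_add_card_filter_not (s := γ) (fun e : LatticeEdge => e.horiz = true)

/-- Every row and column of the box meets `S` and carries at least two boundary edges, so the
length bound forces equality throughout. -/
lemma boundary_of_card_le {m n : ℕ} {S : Set (ℤ × ℤ)} (hS : S.Finite) {γ : Finset LatticeEdge}
    (hγ : (γ : Set LatticeEdge) = edgeBoundary S)
    (hcols : ∀ c : ℤ, 0 ≤ c → c ≤ m → ∃ r, (c, r) ∈ S)
    (hrows : ∀ r : ℤ, 0 ≤ r → r ≤ n → ∃ c, (c, r) ∈ S) (hcard : γ.card ≤ 2 * (m + n + 2)) :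
    (∀ v ∈ S, 0 ≤ v.1 ∧ v.1 ≤ m ∧ 0 ≤ v.2 ∧ v.2 ≤ n) ∧
      (∀ c, {r | (c, r) ∈ S}.OrdConnected) ∧ (∀ r, {c | (c, r) ∈ S}.OrdConnected) ∧
      hCount γ = 2 * (n + 1) ∧ vCount γ = 2 * (m + 1) := by
  have hcols' : Finset.Icc 0 (m : ℤ) ⊆ hS.toFinset.image (lineIdx false) := fun c hc =>
    have ⟨r, hr⟩ := hcols c (Finset.mem_Icc.mp hc).1 (Finset.mem_Icc.mp hc).2
    Finset.mem_image.mpr ⟨(c, r), hS.mem_toFinset.mpr hr, rfl⟩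
  have hrows' : Finset.Icc 0 (n : ℤ) ⊆ hS.toFinset.image (lineIdx true) := fun r hr =>
    have ⟨c, hc⟩ := hrows r (Finset.mem_Icc.mp hr).1 (Finset.mem_Icc.mp hr).2
    Finset.mem_image.mpr ⟨(c, r), hS.mem_toFinset.mpr hc, rfl⟩
  have hv := two_mul_card_lines_le hS hγ false
  have hh := two_mul_card_lines_le hS hγ true
  have hc := Finset.card_le_card hcols'
  have hr := Finset.card_le_card hrows'
  have hsplit : (dirEdges γ true).card + (dirEdges γ false).card = γ.card := hCount_add_vCount γ
  have hcI : (Finset.Icc 0 (m : ℤ)).card = m + 1 := by rw [Int.card_Icc]; omega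
  have hrI : (Finset.Icc 0 (n : ℤ)).card = n + 1 := by rw [Int.card_Icc]; omega
  have hcols_eq := Finset.eq_of_subset_of_card_le hcols' (by omega)
  have hrows_eq := Finset.eq_of_subset_of_card_le hrows' (by omega)
  refine ⟨fun v hv => ?_, ordConnected_line hS hγ false (by omega),
    ordConnected_line hS hγ true (by omega), show (dirEdges γ true).card = _ by omega,
    show (dirEdges γ false).card = _ by omega⟩
  have h₁ : v.1 ∈ Finset.Icc 0 (m : ℤ) :=
    hcols_eq ▸ Finset.mem_image_of_mem _ (hS.mem_toFinset.mpr hv)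
  have h₂ : v.2 ∈ Finset.Icc 0 (n : ℤ) :=
    hrows_eq ▸ Finset.mem_image_of_mem _ (hS.mem_toFinset.mpr hv)
  simp only [Finset.mem_Icc] at h₁ h₂
  exact ⟨h₁.1, h₁.2, h₂.1, h₂.2⟩

theorem exists_staircase_of_mem_gammaN {m n : ℕ} {γ : Finset LatticeEdge}
    (hγ : γ ∈ GammaN {0, ((m : ℤ), (n : ℤ))} (normC (m, n))) :
    ∃ st : Staircase m n, (γ : Set LatticeEdge) = edgeBoundary st.region ∧
      hCount γ = 2 * (n + 1) ∧ vCount γ = 2 * (m + 1) := by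
  obtain ⟨⟨hcont, C, hC, hsub⟩, hcard⟩ := hγ
  have hb := hcont.coe_eq_edgeBoundary hC
  have h0 : ((0 : ℤ), (0 : ℤ)) ∈ C.supp := hsub (Set.mem_insert _ _)
  have hmn : ((m : ℤ), (n : ℤ)) ∈ C.supp := hsub (Set.mem_insert_of_mem _ rfl)
  obtain ⟨w⟩ := C.reachable_of_mem_supp h0 hmn
  have hw : ∀ v ∈ w.support, v ∈ C.supp := fun v hv => C.mem_supp_of_mem_support w h0 hv
  have hstepc : ∀ c : ℤ, 0 ≤ c → c < m → ∃ r, (c, r) ∈ C.supp ∧ (c + 1, r) ∈ C.supp :=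
    fun c h₀ h₁ => exists_linePt_step w hw true h₀ h₁
  have hstepr : ∀ r : ℤ, 0 ≤ r → r < n → ∃ c, (c, r) ∈ C.supp ∧ (c, r + 1) ∈ C.supp :=
    fun r h₀ h₁ => exists_linePt_step w hw false h₀ h₁
  have hcols : ∀ c : ℤ, 0 ≤ c → c ≤ m → ∃ r, (c, r) ∈ C.supp := fun c h₀ h₁ =>
    (lt_or_eq_of_le h₁).elim (fun h => (hstepc c h₀ h).imp fun _ h => h.1) fun h => ⟨n, h ▸ hmn⟩
  have hrows : ∀ r : ℤ, 0 ≤ r → r ≤ n → ∃ c, (c, r) ∈ C.supp := fun r h₀ h₁ =>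
    (lt_or_eq_of_le h₁).elim (fun h => (hstepr r h₀ h).imp fun _ h => h.1) fun h => ⟨m, h ▸ hmn⟩
  obtain ⟨hbox, hcol, hrow, hh, hv⟩ :=
    boundary_of_card_le hC hb hcols hrows (by rw [hcard, normC]; omega)
  obtain ⟨st, hst⟩ := exists_staircase_region_eq h0 hmn hbox hcol hrow hstepc hstepr
  exact ⟨st, hst ▸ hb, hh, hv⟩

/-- For disjoint `γ` and `Q`: the edges of `γ` are closed and those of `Q` are open. -/
def contourEvent (γ Q : Finset LatticeEdge) : Set (LatticeEdge → Bool) :=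
  {ω | ∀ e ∈ γ ∪ Q, ω e = decide (e ∈ Q)}

lemma measurableSet_contourEvent (γ Q : Finset LatticeEdge) :
    MeasurableSet (contourEvent γ Q) := by
  have : contourEvent γ Q =
      ⋂ e ∈ γ ∪ Q, (fun ω : LatticeEdge → Bool => ω e) ⁻¹' {decide (e ∈ Q)} := by
    ext ω
    simp [contourEvent]
  rw [this]
  exact Finset.measurableSet_biInter _ fun e _ => measurable_pi_apply e (measurableSet_singleton _)

lemma closed_and_open_of_mem_contourEvent {γ Q : Finset LatticeEdge} (hd : Disjoint γ Q)
    {ω : LatticeEdge → Bool} (hω : ω ∈ contourEvent γ Q) :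
    (∀ e ∈ γ, ω e = false) ∧ ∀ e ∈ Q, ω e = true := by
  refine ⟨fun e he => ?_, fun e he => ?_⟩
  · simpa [Finset.disjoint_left.mp hd he] using hω e (Finset.mem_union_left _ he)
  · simpa [he] using hω e (Finset.mem_union_right _ he)

lemma mem_of_reachable_of_boundary_closed {S : Set (ℤ × ℤ)} {γ : Finset LatticeEdge}
    (hγ : edgeBoundary S ⊆ γ) {ω : LatticeEdge → Bool} (hω : ∀ e ∈ γ, ω e = false)
    {a b : ℤ × ℤ} (h : (openGraph ω).Reachable a b) (ha : a ∈ S) : b ∈ S := by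
  refine h.mem_of_adj_closed (fun u v hu huv => ?_) ha
  obtain ⟨-, f, hf, hends⟩ := huv
  have hiff := edgeBoundary_subset_iff.mp hγ f fun hfγ => by simp [hω f hfγ] at hf
  rcases Sym2.eq_iff.mp hends with ⟨rfl, rfl⟩ | ⟨rfl, rfl⟩
  exacts [hiff.mp hu, hiff.mpr hu]

namespace Staircase

variable {m n : ℕ} {st : Staircase m n} {γ : Finset LatticeEdge}

lemma disjoint_edges (hγ : (γ : Set LatticeEdge) = edgeBoundary st.region) :
    Disjoint γ st.edges := by
  refine Finset.disjoint_right.mpr fun e he heγ => ?_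
  have : e ∈ edgeBoundary st.region := hγ ▸ heγ
  obtain ⟨h₁, h₂⟩ := st.ends_mem_region he
  exact (not_xor _ _).mpr ⟨fun _ => h₂, fun _ => h₁⟩ this

lemma sameFiniteCluster_of_mem_contourEvent (hγ : (γ : Set LatticeEdge) = edgeBoundary st.region)
    {ω : LatticeEdge → Bool} (hω : ω ∈ contourEvent γ st.edges) :
    SameFiniteCluster ω (0, 0) (m, n) := by
  obtain ⟨hclosed, hopen⟩ := closed_and_open_of_mem_contourEvent (disjoint_edges hγ) hω
  refine ⟨(openGraph ω).connectedComponentMk (0, 0), rfl, ?_, st.region_finite.subset ?_⟩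
  · exact SimpleGraph.ConnectedComponent.sound (st.upper.reachable_of_edges_open
      (fun e he => hopen e (Finset.mem_union_right _ he)) st.corner_mem_upper_verts).symm
  · intro v hv
    exact mem_of_reachable_of_boundary_closed hγ.ge hclosed
      (SimpleGraph.ConnectedComponent.exact hv).symm
      (st.lower_verts_subset st.origin_mem_lower_verts)

/-- On the intersection of two contour events, the open cluster of the origin contains the
column extremes of the first staircase and stays inside the second one. -/
lemma region_subset_of_mem_contourEvent {st' : Staircase m n} {γ' : Finset LatticeEdge}
    (hγ : (γ : Set LatticeEdge) = edgeBoundary st.region)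
    (hγ' : (γ' : Set LatticeEdge) = edgeBoundary st'.region) {ω : LatticeEdge → Bool}
    (hω : ω ∈ contourEvent γ st.edges) (hω' : ω ∈ contourEvent γ' st'.edges) :
    st.region ⊆ st'.region := by
  obtain ⟨-, hopen⟩ := closed_and_open_of_mem_contourEvent (disjoint_edges hγ) hω
  obtain ⟨hclosed', -⟩ := closed_and_open_of_mem_contourEvent (disjoint_edges hγ') hω'
  have hcluster : ∀ v, (openGraph ω).Reachable (0, 0) v → v ∈ st'.region := fun v hv =>
    mem_of_reachable_of_boundary_closed hγ'.ge hclosed' hv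
      (st'.lower_verts_subset st'.origin_mem_lower_verts)
  exact st.region_subset_of_verts_subset
    (fun v hv => hcluster v (st.lower.reachable_of_edges_open
      (fun e he => hopen e (Finset.mem_union_left _ he)) hv))
    (fun v hv => hcluster v (st.upper.reachable_of_edges_open
      (fun e he => hopen e (Finset.mem_union_right _ he)) hv))

lemma disjoint_contourEvent {st' : Staircase m n} {γ' : Finset LatticeEdge}
    (hγ : (γ : Set LatticeEdge) = edgeBoundary st.region)
    (hγ' : (γ' : Set LatticeEdge) = edgeBoundary st'.region) (hne : γ ≠ γ') :
    Disjoint (contourEvent γ st.edges) (contourEvent γ' st'.edges) := by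
  refine Set.disjoint_left.mpr fun ω hω hω' => hne (Finset.coe_injective ?_)
  rw [hγ, hγ', subset_antisymm (region_subset_of_mem_contourEvent hγ hγ' hω hω')
    (region_subset_of_mem_contourEvent hγ' hγ hω' hω)]

end Staircase

open scoped ENNReal

lemma MeasureTheory.natCard_mul_le_measure {Ω ι : Type*} [MeasurableSpace Ω] (μ : Measure Ω)
    {E : ι → Set Ω} {A : Set Ω} {b : ℝ≥0∞} (hd : Pairwise (Function.onFun Disjoint E))
    (hm : ∀ i, MeasurableSet (E i)) (hsub : ∀ i, E i ⊆ A) (hb : ∀ i, b ≤ μ (E i)) :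
    Nat.card ι * b ≤ μ A := by
  rcases finite_or_infinite ι with hι | hι
  · have := Fintype.ofFinite ι
    calc (Nat.card ι : ℝ≥0∞) * b = ∑ _i, b := by simp [Nat.card_eq_fintype_card]
      _ ≤ ∑ i, μ (E i) := Finset.sum_le_sum fun i _ => hb i
      _ = μ (⋃ i, E i) := by rw [measure_iUnion hd hm, tsum_fintype]
      _ ≤ μ A := measure_mono (Set.iUnion_subset hsub)
  · simp [Nat.card_eq_zero_of_infinite]

section Probability

variable {ph pv : ℝ}

lemma prod_one_sub_edgeProb (γ : Finset LatticeEdge) :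
    ∏ e ∈ γ, (1 - edgeProb ph pv e) = (1 - ph) ^ hCount γ * (1 - pv) ^ vCount γ := by
  rw [← Finset.prod_filter_mul_prod_filter_not γ (fun e => e.horiz = true), hCount, vCount]
  congr 1
  · exact Finset.prod_eq_pow_card fun e he => by simp [edgeProb, (Finset.mem_filter.mp he).2]
  · simp only [Bool.not_eq_true]
    exact Finset.prod_eq_pow_card fun e he => by simp [edgeProb, (Finset.mem_filter.mp he).2]

lemma IsBernoulliProduct.measure_contourEvent {P : Measure (LatticeEdge → Bool)}
    (hP : IsBernoulliProduct ph pv P) (hph : 0 ≤ ph) (hphv : ph ≤ pv) (hpv : pv ≤ 1)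
    {γ Q : Finset LatticeEdge} (hd : Disjoint γ Q) :
    P (contourEvent γ Q) = ENNReal.ofReal
      ((1 - ph) ^ hCount γ * (1 - pv) ^ vCount γ * ∏ e ∈ Q, edgeProb ph pv e) := by
  have hp : ∀ e, 0 ≤ edgeProb ph pv e ∧ 0 ≤ 1 - edgeProb ph pv e := fun e => by
    unfold edgeProb; split_ifs <;> constructor <;> linarith
  rw [contourEvent, hP.2, Finset.prod_union hd, ← prod_one_sub_edgeProb,
    ENNReal.ofReal_mul (Finset.prod_nonneg fun e _ => (hp e).2),
    ENNReal.ofReal_prod_of_nonneg fun e _ => (hp e).2,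
    ENNReal.ofReal_prod_of_nonneg fun e _ => (hp e).1]
  congr 1
  · exact Finset.prod_congr rfl fun e he => by simp [Finset.disjoint_left.mp hd he]
  · exact Finset.prod_congr rfl fun e he => by simp [he]

lemma Staircase.le_measure_contourEvent {m n : ℕ} {P : Measure (LatticeEdge → Bool)}
    (hP : IsBernoulliProduct ph pv P) (hph : 0 ≤ ph) (hphv : ph ≤ pv) (hpv : pv ≤ 1)
    {st : Staircase m n} {γ : Finset LatticeEdge}
    (hγ : (γ : Set LatticeEdge) = edgeBoundary st.region)
    (hh : hCount γ = 2 * (n + 1)) (hv : vCount γ = 2 * (m + 1)) :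
    ENNReal.ofReal ((1 - ph) ^ (2 * (n + 1)) * (1 - pv) ^ (2 * (m + 1)) * ph ^ (2 * (m + n))) ≤
      P (contourEvent γ st.edges) := by
  rw [hP.measure_contourEvent hph hphv hpv (Staircase.disjoint_edges hγ), hh, hv]
  refine ENNReal.ofReal_le_ofReal (mul_le_mul_of_nonneg_left ?_ (by
    have : 0 ≤ 1 - ph := by linarith
    have : 0 ≤ 1 - pv := by linarith
    positivity))
  calc ph ^ (2 * (m + n)) ≤ ph ^ st.edges.card :=
        pow_le_pow_of_le_one hph (hphv.trans hpv) st.card_edges_le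
    _ = ∏ _e ∈ st.edges, ph := (Finset.prod_const ph).symm
    _ ≤ ∏ e ∈ st.edges, edgeProb ph pv e :=
        Finset.prod_le_prod (fun _ _ => hph) fun e _ => by unfold edgeProb; split_ifs <;> linarith

lemma lam_zpow_mul_lam_zpow_mul_pow_le (hph : 0 < ph) (hphv : ph < pv) (hpv : pv < 1)
    (m n : ℕ) :
    lam ph ^ (2 * ((n : ℤ) + 1)) * lam pv ^ (2 * ((m : ℤ) + 1)) * ph ^ (2 * normC (m, n)) ≤
      (1 - ph) ^ (2 * (n + 1)) * (1 - pv) ^ (2 * (m + 1)) * ph ^ (2 * (m + n)) := by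
  have hz : ∀ (a : ℝ) (k : ℕ), a ^ (2 * ((k : ℤ) + 1)) = a ^ (2 * (k + 1)) := fun a k => by
    rw [← zpow_natCast]
    push_cast
    rfl
  have hnorm : normC (m, n) = 2 * (m + n + 2) := by
    simp only [normC]
    omega
  have hpv0 : 0 < pv := hph.trans hphv
  have key : ph ^ (2 * (2 * (m + n + 2))) ≤
      ph ^ (2 * (m + n)) * (ph ^ (2 * (n + 1)) * pv ^ (2 * (m + 1))) := by
    calc ph ^ (2 * (2 * (m + n + 2)))
        = ph ^ (2 * (m + n)) * (ph ^ (2 * (n + 1)) * ph ^ (2 * (m + 1))) * ph ^ 4 := by ring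
      _ ≤ ph ^ (2 * (m + n)) * (ph ^ (2 * (n + 1)) * pv ^ (2 * (m + 1))) * 1 := by
          gcongr
          exact pow_le_one₀ hph.le (by linarith)
      _ = _ := mul_one _
  have h1ph : 0 ≤ 1 - ph := by linarith
  have h1pv : 0 ≤ 1 - pv := by linarith
  calc lam ph ^ (2 * ((n : ℤ) + 1)) * lam pv ^ (2 * ((m : ℤ) + 1)) * ph ^ (2 * normC (m, n))
      = (1 - ph) ^ (2 * (n + 1)) * (1 - pv) ^ (2 * (m + 1)) *
          (ph ^ (2 * (2 * (m + n + 2))) / (ph ^ (2 * (n + 1)) * pv ^ (2 * (m + 1)))) := by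
        rw [hz, hz, hnorm, lam, lam, div_pow, div_pow]
        ring
    _ ≤ (1 - ph) ^ (2 * (n + 1)) * (1 - pv) ^ (2 * (m + 1)) * ph ^ (2 * (m + n)) := by
        gcongr
        rwa [div_le_iff₀ (by positivity)]

end Probability

/-- lower bound on the truncated connectivity. For
`x = (x₁,x₂)` with `0 < x₁ < x₂` and `0 < p_h < p_v < 1`:
`τ^f_p(0,x) ≥ β_x λ_h^{2(x₂+1)} λ_v^{2(x₁+1)} p_h^{2‖x‖}`. -/
theorem tauF_lower_bound (x1 x2 : ℤ) (h1 : 0 < x1) (h2 : x1 < x2)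
    (ph pv : ℝ) (hph : 0 < ph) (hphv : ph < pv) (hpv : pv < 1)
    (P : Measure (LatticeEdge → Bool)) (hP : IsBernoulliProduct ph pv P) :
    (betaX (x1, x2) : ℝ) * lam ph ^ (2 * (x2 + 1)) * lam pv ^ (2 * (x1 + 1)) *
        ph ^ (2 * normC (x1, x2)) ≤
      tauF P (0, 0) (x1, x2) := by
  lift x1 to ℕ using h1.le with m
  lift x2 to ℕ using (h1.trans h2).le with n
  have := hP.1
  choose st hst using fun γ : GammaN {0, ((m : ℤ), (n : ℤ))} (normC (m, n)) =>
    exists_staircase_of_mem_gammaN γ.2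
  have hsum := natCard_mul_le_measure P
    (fun γ γ' hne =>
      Staircase.disjoint_contourEvent (hst γ).1 (hst γ').1 (Subtype.coe_ne_coe.mpr hne))
    (fun γ => measurableSet_contourEvent _ _)
    (fun γ _ hω => Staircase.sameFiniteCluster_of_mem_contourEvent (hst γ).1 hω)
    (fun γ => Staircase.le_measure_contourEvent hP hph.le hphv.le hpv.le
      (hst γ).1 (hst γ).2.1 (hst γ).2.2)
  calc _ = (betaX (m, n) : ℝ) * (lam ph ^ (2 * ((n : ℤ) + 1)) * lam pv ^ (2 * ((m : ℤ) + 1)) *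
        ph ^ (2 * normC (m, n))) := by ring
    _ ≤ _ := mul_le_mul_of_nonneg_left (lam_zpow_mul_lam_zpow_mul_pow_le hph hphv hpv m n)
        (Nat.cast_nonneg _)
    _ ≤ tauF P (0, 0) (m, n) := (ENNReal.ofReal_le_iff_le_toReal (measure_ne_top _ _)).mp <| by
        rwa [ENNReal.ofReal_mul (Nat.cast_nonneg _), ENNReal.ofReal_natCast]
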